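/- arXiv:2508.01076 — 9 statements merged into one kernel-verified Lean document; each statement's English description precedes it below -/
import Mathlib

section
/- Let 𝒢 and 𝒟 be finite sets (generators and consumers), e_G : 𝒢 → ℝ, c_D : 𝒟 → ℝ with c_D(d) ≥ 0 for all d, λ_G : 𝒢 → ℝ, λ_D : 𝒟 → ℝ, and π : 𝒢 × 𝒟 → ℝ with π ≥ 0. Assume dual feasibility (λ_G(g) + λ_D(d) + c_D(d)·e_G(g) ≤ 0 for all g, d) and complementary slackness (π(g,d)·(λ_G(g) + λ_D(d) + c_D(d)·e_G(g)) = 0 for all g, d). If a generator h serves some consumer ℓ, i.e. π(h,ℓ) > 0, then every generator k with e_G(k) ≥ e_G(h) satisfies λ_G(k) − λ_G(h) ≤ c_D(ℓ)·(e_G(h) − e_G(k)) ≤ 0. Consequently, if every generator serves at least one consumer, then the generator carbon adjustments λ_G are antitone in the emission factors: e_G(h) ≤ e_G(k) implies λ_G(k) ≤ λ_G(h). -/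
/-- Theorem IV.2 (generator part): ordering of generator carbon adjustments. -/
theorem generator_carbon_adjustment_ordering
    {G D : Type*} [Fintype G] [Fintype D]
    (eG : G → ℝ) (cD : D → ℝ) (hcD : ∀ d, 0 ≤ cD d)
    (lamG : G → ℝ) (lamD : D → ℝ)
    (pi : G → D → ℝ) (hpi : ∀ g d, 0 ≤ pi g d)
    (hdual : ∀ g d, lamG g + lamD d + cD d * eG g ≤ 0)
    (hcs : ∀ g d, pi g d * (lamG g + lamD d + cD d * eG g) = 0) :
    (∀ h ℓ, 0 < pi h ℓ → ∀ k, eG k ≥ eG h →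
      lamG k - lamG h ≤ cD ℓ * (eG h - eG k) ∧ cD ℓ * (eG h - eG k) ≤ 0) ∧
    ((∀ g : G, ∃ d : D, 0 < pi g d) →
      ∀ h k, eG h ≤ eG k → lamG k ≤ lamG h) := by
  have main : ∀ h ℓ, 0 < pi h ℓ → ∀ k, eG k ≥ eG h →
      lamG k - lamG h ≤ cD ℓ * (eG h - eG k) ∧ cD ℓ * (eG h - eG k) ≤ 0 := by
    intro h ℓ hpos k hk
    have heq : lamG h + lamD ℓ + cD ℓ * eG h = 0 := by
      have := hcs h ℓ
      rcases mul_eq_zero.mp this with h0 | h0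
      · exact absurd h0 (ne_of_gt hpos)
      · exact h0
    have hd := hdual k ℓ
    constructor
    · nlinarith
    · have : eG h - eG k ≤ 0 := by linarith
      exact mul_nonpos_of_nonneg_of_nonpos (hcD ℓ) this
  refine ⟨main, fun hall h k hk => ?_⟩
  obtain ⟨ℓ, hℓ⟩ := hall h
  have := main h ℓ hℓ k hk
  linarith [this.1, this.2]
end

section
/- Let 𝒢 and 𝒟 be finite sets, e_G : 𝒢 → ℝ with e_G(g) ≥ 0 for all g, c_D : 𝒟 → ℝ, λ_G : 𝒢 → ℝ, λ_D : 𝒟 → ℝ, and π : 𝒢 × 𝒟 → ℝ with π ≥ 0. Assume dual feasibility (λ_G(g) + λ_D(d) + c_D(d)·e_G(g) ≤ 0 for all g, d) and complementary slackness (π(g,d)·(λ_G(g) + λ_D(d) + c_D(d)·e_G(g)) = 0 for all g, d). If a consumer d₂ is served by some generator r, i.e. π(r,d₂) > 0, then every consumer d₁ with c_D(d₁) ≥ c_D(d₂) satisfies λ_D(d₁) − λ_D(d₂) ≤ e_G(r)·(c_D(d₂) − c_D(d₁)) ≤ 0. Consequently, if every consumer is served by at least one generator, then consumers ordered by decreasing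 carbon cost have increasing carbon adjustments: c_D(d₁) ≥ c_D(d₂) implies λ_D(d₁) ≤ λ_D(d₂). -/
/-- Theorem IV.2 (consumer part): ordering of consumer carbon adjustments. -/
theorem consumer_carbon_adjustment_ordering
    {G D : Type*} [Fintype G] [Fintype D]
    (eG : G → ℝ) (heG : ∀ g, 0 ≤ eG g) (cD : D → ℝ)
    (lamG : G → ℝ) (lamD : D → ℝ)
    (pi : G → D → ℝ) (hpi : ∀ g d, 0 ≤ pi g d)
    (hdual : ∀ g d, lamG g + lamD d + cD d * eG g ≤ 0)
    (hcs : ∀ g d, pi g d * (lamG g + lamD d + cD d * eG g) = 0) :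
    (∀ d₂ r, 0 < pi r d₂ → ∀ d₁, cD d₁ ≥ cD d₂ →
      lamD d₁ - lamD d₂ ≤ eG r * (cD d₂ - cD d₁) ∧ eG r * (cD d₂ - cD d₁) ≤ 0) ∧
    ((∀ d : D, ∃ g : G, 0 < pi g d) →
      ∀ d₁ d₂, cD d₁ ≥ cD d₂ → lamD d₁ ≤ lamD d₂) := by
  have key : ∀ d₂ r, 0 < pi r d₂ → ∀ d₁, cD d₁ ≥ cD d₂ →
      lamD d₁ - lamD d₂ ≤ eG r * (cD d₂ - cD d₁) ∧ eG r * (cD d₂ - cD d₁) ≤ 0 := by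
    intro d₂ r hr d₁ hc
    have heq : lamG r + lamD d₂ + cD d₂ * eG r = 0 := by
      have := hcs r d₂
      rcases mul_eq_zero.mp this with h | h
      · exact absurd h (ne_of_gt hr)
      · exact h
    have h1 := hdual r d₁
    constructor
    · nlinarith
    · have := mul_nonpos_of_nonneg_of_nonpos (heG r) (by linarith : cD d₂ - cD d₁ ≤ 0)
      exact this
  refine ⟨key, fun hall d₁ d₂ hc => ?_⟩
  obtain ⟨r, hr⟩ := hall d₂
  have := key d₂ r hr d₁ hc
  linarith [this.1, this.2]
end

section
/- Let 𝒢 and 𝒟 be finite sets, e_G : 𝒢 → ℝ, c_D : 𝒟 → ℝ, λ_G : 𝒢 → ℝ, λ_D : 𝒟 → ℝ, and π : 𝒢 × 𝒟 → ℝ with π ≥ 0 satisfying dual feasibility (λ_G(g) + λ_D(d) + c_D(d)·e_G(g) ≤ 0 for all g, d) and complementary slackness (λ_G(g) + λ_D(d) + c_D(d)·e_G(g) = 0 whenever π(g,d) > 0). If consumer d₁ is served by a generator r₁ with e_G(r₁) = 0 (π(r₁,d₁) > 0) and consumer d₂ is served by a generator r₂ with e_G(r₂) = 0 (π(r₂,d₂)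 > 0), then λ_D(d₁) = λ_D(d₂). -/
/-- Remark after Corollaries IV.3 and IV.4: loads served by zero-emission generators
have the same carbon adjustment. -/
theorem loads_served_by_zero_emission_generators_equal_adjustment
    {G D : Type*} [Fintype G] [Fintype D]
    (eG : G → ℝ) (cD : D → ℝ)
    (lamG : G → ℝ) (lamD : D → ℝ)
    (pi : G → D → ℝ) (hpi : ∀ g d, 0 ≤ pi g d)
    (hdual : ∀ g d, lamG g + lamD d + cD d * eG g ≤ 0)
    (hcs : ∀ g d, 0 < pi g d → lamG g + lamD d + cD d * eG g = 0)
    (d₁ d₂ : D) (r₁ r₂ : G)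
    (he₁ : eG r₁ = 0) (he₂ : eG r₂ = 0)
    (h₁ : 0 < pi r₁ d₁) (h₂ : 0 < pi r₂ d₂) :
    lamD d₁ = lamD d₂ := by
  have a := hcs r₁ d₁ h₁
  have b := hcs r₂ d₂ h₂
  have c := hdual r₁ d₂
  have e := hdual r₂ d₁
  rw [he₁] at a c
  rw [he₂] at b e
  simp at a b c e
  linarith
end

section
/- Let 𝒢 and 𝒟 be finite sets, e_G : 𝒢 → ℝ, c_D : 𝒟 → ℝ, λ_G : 𝒢 → ℝ, λ_D : 𝒟 → ℝ, and π : 𝒢 × 𝒟 → ℝ with π ≥ 0 satisfying complementary slackness (π(g,d)·(λ_G(g) + λ_D(d) + c_D(d)·e_G(g)) = 0 for all g, d). Define P_G(g) = Σ_{d∈𝒟} π(g,d), P_D(d) = Σ_{g∈𝒢} π(g,d), and E_D(d) = Σ_{g∈𝒢} e_G(g)·π(g,d). Then Σ_{d∈𝒟} λ_D(d)·P_D(d) + Σ_{d∈𝒟} c_D(d)·E_D(d) + Σ_{g∈𝒢} λ_G(g)·P_G(g) = 0. -/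
open Finset

/-- Key identity in the proof of Proposition V.1 (revenue adequacy):
equation (23) holds with equality. -/
theorem revenue_adequacy_key_identity
    {G D : Type*} [Fintype G] [Fintype D]
    (eG : G → ℝ) (cD : D → ℝ)
    (lamG : G → ℝ) (lamD : D → ℝ)
    (pi : G → D → ℝ) (hpi : ∀ g d, 0 ≤ pi g d)
    (hcs : ∀ g d, pi g d * (lamG g + lamD d + cD d * eG g) = 0)
    (PG : G → ℝ) (PD : D → ℝ) (ED : D → ℝ)
    (hPG : ∀ g, PG g = ∑ d : D, pi g d)
    (hPD : ∀ d, PD d = ∑ g : G, pi g d)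
    (hED : ∀ d, ED d = ∑ g : G, eG g * pi g d) :
    ∑ d : D, lamD d * PD d + ∑ d : D, cD d * ED d + ∑ g : G, lamG g * PG g = 0 := by
  simp only [hPG, hPD, hED, Finset.mul_sum]
  rw [Finset.sum_comm (s := Finset.univ (α := D)),
      Finset.sum_comm (s := Finset.univ (α := D)), ← Finset.sum_add_distrib,
      ← Finset.sum_add_distrib]
  rw [show (0:ℝ) = ∑ g : G, ∑ d : D, pi g d * (lamG g + lamD d + cD d * eG g) by
    simp [hcs]]
  refine Finset.sum_congr rfl fun g _ => ?_
  rw [← Finset.sum_add_distrib, ← Finset.sum_add_distrib]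
  exact Finset.sum_congr rfl fun d _ => by ring
end

section
/- Consider a power network with finite bus set 𝒩, symmetric line set ℒ ⊆ 𝒩 × 𝒩 ((i,j) ∈ ℒ ↔ (j,i) ∈ ℒ) with susceptances β(i,j) = β(j,i) ∈ ℝ and flow limits F(i,j) = F(j,i) ∈ ℝ, a reference bus r ∈ 𝒩, finite sets 𝒢 of generators and 𝒟 of consumers located at buses, generator costs c_G : 𝒢 → ℝ and bounds 0 ≤ P_G^min ≤ P_G^max, consumer utilities u_D : 𝒟 → ℝ and bounds 0 ≤ P_D^min ≤ P_D^max, and emission factors e_G : 𝒢 → ℝ. Let S be the set of (P_G, P_D, θ) satisfying nodal power balance at every bus, line flow limits |β(i,j)(θ(i)−θ(j))| ≤ F(i,j) for all (i,j) ∈ ℒ, the generation and demand bounds, and θ(r) = 0; and let S' be the set of (P_G, P_D, θ, π, E_D) such that (P_G, P_D, θ) ∈ S, π ≥ 0, Σ_{d} π(g,d) = P_G(g) for all g, Σ_{g} π(g,d) = P_D(d) for all d, and E_D(d) = Σ_{g} e_G(g)·π(g,d) for all d. If all consumer carbon costs are zero (c_D(d) = 0 for all d), then the supremum of the carbon-aware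 social welfare Σ_d u_D(d)·P_D(d) − Σ_d c_D(d)·E_D(d) − Σ_g c_G(g)·P_G(g) over S' equals the supremum of the standard social welfare Σ_d u_D(d)·P_D(d) − Σ_g c_G(g)·P_G(g) over S. -/
open Finset

private lemma flow_sum_zero {N : Type*} [Fintype N] (L : N → N → Prop)
    [∀ i j, Decidable (L i j)]
    (hLsym : ∀ i j, L i j ↔ L j i) (β : N → N → ℝ) (hβsym : ∀ i j, β i j = β j i) (θ : N → ℝ) :
    ∑ i, ∑ j ∈ univ.filter (fun j => L i j), β i j * (θ i - θ j) = 0 := by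
  simp only [Finset.sum_filter]
  set f : N → N → ℝ := fun i j => if L i j then β i j * (θ i - θ j) else 0 with hf
  have h : ∀ i j, f i j = -(f j i) := by
    intro i j; by_cases h : L i j
    · simp only [hf, if_pos h, if_pos ((hLsym i j).mp h), hβsym i j]; ring
    · simp only [hf, if_neg h, if_neg (fun h' => h ((hLsym i j).mpr h')), neg_zero]
  have hS : (∑ i, ∑ j, f i j) + (∑ i, ∑ j, f i j) = 0 := by
    nth_rewrite 2 [Finset.sum_comm]
    rw [← Finset.sum_add_distrib]
    apply Finset.sum_eq_zero; intro i _
    rw [← Finset.sum_add_distrib]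
    apply Finset.sum_eq_zero; intro j _
    rw [h i j]; ring
  linarith

/-- Proposition VI.1: with all consumer carbon costs equal to zero, the carbon-aware
market clearing is equivalent to the standard carbon-agnostic market clearing. -/
theorem zero_carbon_cost_equiv_standard_clearing
    {N G D : Type*} [Fintype N] [Fintype G] [Fintype D] [DecidableEq N]
    (L : N → N → Prop) [∀ i j, Decidable (L i j)]
    (hLsym : ∀ i j, L i j ↔ L j i)
    (β : N → N → ℝ) (hβsym : ∀ i j, β i j = β j i)
    (F : N → N → ℝ) (hFsym : ∀ i j, F i j = F j i)
    (r : N)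
    (busG : G → N) (busD : D → N)
    (cG : G → ℝ) (PGmin PGmax : G → ℝ)
    (hPGmin : ∀ g, 0 ≤ PGmin g) (hPGbounds : ∀ g, PGmin g ≤ PGmax g)
    (uD : D → ℝ) (PDmin PDmax : D → ℝ)
    (hPDmin : ∀ d, 0 ≤ PDmin d) (hPDbounds : ∀ d, PDmin d ≤ PDmax d)
    (eG : G → ℝ) (cD : D → ℝ) (hcD : ∀ d, cD d = 0) :
    sSup {w : ℝ | ∃ (PG : G → ℝ) (PD : D → ℝ) (θ : N → ℝ)
        (pi : G → D → ℝ) (ED : D → ℝ),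
      (∀ i : N,
        ∑ d ∈ univ.filter (fun d => busD d = i), PD d
          + ∑ j ∈ univ.filter (fun j => L i j), β i j * (θ i - θ j)
        = ∑ g ∈ univ.filter (fun g => busG g = i), PG g) ∧
      (∀ i j, L i j → |β i j * (θ i - θ j)| ≤ F i j) ∧
      (∀ g, PGmin g ≤ PG g ∧ PG g ≤ PGmax g) ∧
      (∀ d, PDmin d ≤ PD d ∧ PD d ≤ PDmax d) ∧
      θ r = 0 ∧
      (∀ g d, 0 ≤ pi g d) ∧
      (∀ g, ∑ d : D, pi g d = PG g) ∧
      (∀ d, ∑ g : G, pi g d = PD d) ∧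
      (∀ d, ED d = ∑ g : G, eG g * pi g d) ∧
      w = ∑ d : D, uD d * PD d - ∑ d : D, cD d * ED d - ∑ g : G, cG g * PG g}
    =
    sSup {w : ℝ | ∃ (PG : G → ℝ) (PD : D → ℝ) (θ : N → ℝ),
      (∀ i : N,
        ∑ d ∈ univ.filter (fun d => busD d = i), PD d
          + ∑ j ∈ univ.filter (fun j => L i j), β i j * (θ i - θ j)
        = ∑ g ∈ univ.filter (fun g => busG g = i), PG g) ∧
      (∀ i j, L i j → |β i j * (θ i - θ j)| ≤ F i j) ∧
      (∀ g, PGmin g ≤ PG g ∧ PG g ≤ PGmax g) ∧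
      (∀ d, PDmin d ≤ PD d ∧ PD d ≤ PDmax d) ∧
      θ r = 0 ∧
      w = ∑ d : D, uD d * PD d - ∑ g : G, cG g * PG g} := by
  congr 1
  ext w
  constructor
  · rintro ⟨PG, PD, θ, pi, ED, h1, h2, h3, h4, h5, -, -, -, -, hw⟩
    refine ⟨PG, PD, θ, h1, h2, h3, h4, h5, ?_⟩
    rw [hw]
    have : ∑ d : D, cD d * ED d = 0 := by
      apply Finset.sum_eq_zero; intro d _; rw [hcD d, zero_mul]
    rw [this]; ring
  · rintro ⟨PG, PD, θ, h1, h2, h3, h4, h5, hw⟩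
    -- total generation equals total demand
    have hPGnn : ∀ g, 0 ≤ PG g := fun g => le_trans (hPGmin g) (h3 g).1
    have hPDnn : ∀ d, 0 ≤ PD d := fun d => le_trans (hPDmin d) (h4 d).1
    have hbal : ∑ d : D, PD d = ∑ g : G, PG g := by
      have := Finset.sum_congr rfl (fun i (_ : i ∈ (univ : Finset N)) => h1 i)
      rw [Finset.sum_add_distrib, flow_sum_zero L hLsym β hβsym θ,
        Finset.sum_fiberwise univ busD PD, Finset.sum_fiberwise univ busG PG] at this
      linarith
    set T : ℝ := ∑ g : G, PG g with hT
    have hTnn : 0 ≤ T := Finset.sum_nonneg fun g _ => hPGnn g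
    rcases eq_or_lt_of_le hTnn with hT0 | hTpos
    · -- T = 0 : everything is zero, take pi = 0
      have hPG0 : ∀ g, PG g = 0 := by
        intro g
        exact (Finset.sum_eq_zero_iff_of_nonneg (fun g _ => hPGnn g)).mp hT0.symm g (mem_univ g)
      have hPD0 : ∀ d, PD d = 0 := by
        intro d
        refine (Finset.sum_eq_zero_iff_of_nonneg (fun d _ => hPDnn d)).mp ?_ d (mem_univ d)
        rw [hbal]; exact hT0.symm
      refine ⟨PG, PD, θ, fun _ _ => 0, fun _ => 0, h1, h2, h3, h4, h5,
        fun g d => le_refl 0, ?_, ?_, ?_, ?_⟩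
      · intro g; simp [hPG0 g]
      · intro d; simp [hPD0 d]
      · intro d; simp
      · rw [hw]
        have : ∑ d : D, cD d * (0:ℝ) = 0 := by simp
        rw [this]; ring
    · -- T > 0 : product coupling
      refine ⟨PG, PD, θ, fun g d => PG g * PD d / T,
        fun d => ∑ g : G, eG g * (PG g * PD d / T), h1, h2, h3, h4, h5, ?_, ?_, ?_,
        fun d => rfl, ?_⟩
      · intro g d
        exact div_nonneg (mul_nonneg (hPGnn g) (hPDnn d)) hTnn
      · intro g
        rw [← Finset.sum_div, ← Finset.mul_sum, hbal, mul_div_assoc,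
          div_self (ne_of_gt hTpos), mul_one]
      · intro d
        rw [← Finset.sum_div, ← Finset.sum_mul, ← hT, mul_comm, mul_div_assoc,
          div_self (ne_of_gt hTpos), mul_one]
      · rw [hw]
        have : ∑ d : D, cD d * (∑ g : G, eG g * (PG g * PD d / T)) = 0 := by
          apply Finset.sum_eq_zero; intro d _; rw [hcD d, zero_mul]
        rw [this]; ring
end

section
/- Consider a power network with finite bus set 𝒩, symmetric line set ℒ ⊆ 𝒩 × 𝒩 ((i,j) ∈ ℒ ↔ (j,i) ∈ ℒ) with susceptances β(i,j) = β(j,i) ∈ ℝ and flow limits F(i,j) = F(j,i) ∈ ℝ, a reference bus r ∈ 𝒩, finite sets 𝒢 of generators and 𝒟 of consumers located at buses, generator costs c_G : 𝒢 → ℝ and bounds 0 ≤ P_G^min ≤ P_G^max, consumer utilities u_D : 𝒟 → ℝ and bounds 0 ≤ P_D^min ≤ P_D^max, and emission factors e_G : 𝒢 → ℝ. Let S be the set of (P_G, P_D, θ) satisfying nodal power balance at every bus, line flow limits |β(i,j)(θ(i)−θ(j))| ≤ F(i,j) for all (i,j) ∈ ℒ, the generation and demand bounds, and θ(r) = 0;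 and let S' be the set of (P_G, P_D, θ, π, E_D) such that (P_G, P_D, θ) ∈ S, π ≥ 0, Σ_{d} π(g,d) = P_G(g) for all g, Σ_{g} π(g,d) = P_D(d) for all d, and E_D(d) = Σ_{g} e_G(g)·π(g,d) for all d. Fix c_tax ∈ ℝ and suppose every consumer has the same carbon cost c_D(d) = c_tax. Then the supremum of Σ_d u_D(d)·P_D(d) − c_tax·Σ_d E_D(d) − Σ_g c_G(g)·P_G(g) over S' equals the supremum of Σ_d u_D(d)·P_D(d) − Σ_g (c_G(g) + c_tax·e_G(g))·P_G(g) over S. -/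
open Finset

/-- Proposition VI.2: uniform consumer carbon costs equal to `ctax` are equivalent to
a carbon tax on generators at rate `ctax`. -/
theorem uniform_carbon_cost_equiv_carbon_tax
    {N G D : Type*} [Fintype N] [Fintype G] [Fintype D] [DecidableEq N]
    (L : N → N → Prop) [∀ i j, Decidable (L i j)]
    (hLsym : ∀ i j, L i j ↔ L j i)
    (β : N → N → ℝ) (hβsym : ∀ i j, β i j = β j i)
    (F : N → N → ℝ) (hFsym : ∀ i j, F i j = F j i)
    (r : N)
    (busG : G → N) (busD : D → N)
    (cG : G → ℝ) (PGmin PGmax : G → ℝ)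
    (hPGmin : ∀ g, 0 ≤ PGmin g) (hPGbounds : ∀ g, PGmin g ≤ PGmax g)
    (uD : D → ℝ) (PDmin PDmax : D → ℝ)
    (hPDmin : ∀ d, 0 ≤ PDmin d) (hPDbounds : ∀ d, PDmin d ≤ PDmax d)
    (eG : G → ℝ) (cD : D → ℝ) (ctax : ℝ) (hcD : ∀ d, cD d = ctax) :
    sSup {w : ℝ | ∃ (PG : G → ℝ) (PD : D → ℝ) (θ : N → ℝ)
        (pi : G → D → ℝ) (ED : D → ℝ),
      (∀ i : N,
        ∑ d ∈ univ.filter (fun d => busD d = i), PD d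
          + ∑ j ∈ univ.filter (fun j => L i j), β i j * (θ i - θ j)
        = ∑ g ∈ univ.filter (fun g => busG g = i), PG g) ∧
      (∀ i j, L i j → |β i j * (θ i - θ j)| ≤ F i j) ∧
      (∀ g, PGmin g ≤ PG g ∧ PG g ≤ PGmax g) ∧
      (∀ d, PDmin d ≤ PD d ∧ PD d ≤ PDmax d) ∧
      θ r = 0 ∧
      (∀ g d, 0 ≤ pi g d) ∧
      (∀ g, ∑ d : D, pi g d = PG g) ∧
      (∀ d, ∑ g : G, pi g d = PD d) ∧
      (∀ d, ED d = ∑ g : G, eG g * pi g d) ∧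
      w = ∑ d : D, uD d * PD d - ctax * ∑ d : D, ED d - ∑ g : G, cG g * PG g}
    =
    sSup {w : ℝ | ∃ (PG : G → ℝ) (PD : D → ℝ) (θ : N → ℝ),
      (∀ i : N,
        ∑ d ∈ univ.filter (fun d => busD d = i), PD d
          + ∑ j ∈ univ.filter (fun j => L i j), β i j * (θ i - θ j)
        = ∑ g ∈ univ.filter (fun g => busG g = i), PG g) ∧
      (∀ i j, L i j → |β i j * (θ i - θ j)| ≤ F i j) ∧
      (∀ g, PGmin g ≤ PG g ∧ PG g ≤ PGmax g) ∧
      (∀ d, PDmin d ≤ PD d ∧ PD d ≤ PDmax d) ∧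
      θ r = 0 ∧
      w = ∑ d : D, uD d * PD d - ∑ g : G, (cG g + ctax * eG g) * PG g} := by
  congr 1
  ext w
  simp only [Set.mem_setOf_eq]
  have hsplit : ∀ PG : G → ℝ, ∑ g : G, (cG g + ctax * eG g) * PG g
      = ∑ g : G, cG g * PG g + ctax * ∑ g : G, eG g * PG g := by
    intro PG
    rw [Finset.mul_sum, ← Finset.sum_add_distrib]
    exact Finset.sum_congr rfl fun g _ => by ring
  constructor
  · rintro ⟨PG, PD, θ, pi, ED, h1, h2, h3, h4, h5, hpos, hrow, hcol, hED, hw⟩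
    refine ⟨PG, PD, θ, h1, h2, h3, h4, h5, ?_⟩
    have hE : ∑ d : D, ED d = ∑ g : G, eG g * PG g := by
      simp only [hED]
      rw [Finset.sum_comm]
      exact Finset.sum_congr rfl fun g _ => by rw [← Finset.mul_sum, hrow]
    rw [hw, hE, hsplit]
    ring
  · rintro ⟨PG, PD, θ, h1, h2, h3, h4, h5, hw⟩
    have hPGnn : ∀ g, 0 ≤ PG g := fun g => le_trans (hPGmin g) (h3 g).1
    have hPDnn : ∀ d, 0 ≤ PD d := fun d => le_trans (hPDmin d) (h4 d).1
    -- total flow over all lines is zero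
    have hT : (∑ i : N, ∑ j ∈ univ.filter (fun j => L i j), β i j * (θ i - θ j)) = 0 := by
      simp only [Finset.sum_filter]
      have key : (∑ i : N, ∑ j : N, if L i j then β i j * (θ i - θ j) else 0)
          = -(∑ i : N, ∑ j : N, if L i j then β i j * (θ i - θ j) else 0) := by
        conv_lhs => rw [Finset.sum_comm]
        rw [← Finset.sum_neg_distrib]
        refine Finset.sum_congr rfl fun a _ => ?_
        rw [← Finset.sum_neg_distrib]
        refine Finset.sum_congr rfl fun b _ => ?_
        by_cases h : L a b
        · rw [if_pos ((hLsym a b).1 h), if_pos h, hβsym b a]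
          ring
        · have h' : ¬ L b a := fun hh => h ((hLsym a b).2 hh)
          rw [if_neg h', if_neg h, neg_zero]
      linarith
    -- total generation equals total demand
    have hbal : ∑ d : D, PD d = ∑ g : G, PG g := by
      have hsum := Finset.sum_congr rfl (fun i (_ : i ∈ (univ : Finset N)) => h1 i)
      rw [Finset.sum_add_distrib, hT, add_zero,
        Finset.sum_fiberwise (univ : Finset D) busD PD,
        Finset.sum_fiberwise (univ : Finset G) busG PG] at hsum
      exact hsum
    by_cases hS : (∑ g : G, PG g) = 0
    · have hPG0 : ∀ g, PG g = 0 := fun g =>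
        (Finset.sum_eq_zero_iff_of_nonneg (fun g _ => hPGnn g)).1 hS g (mem_univ g)
      have hPD0 : ∀ d, PD d = 0 := fun d =>
        (Finset.sum_eq_zero_iff_of_nonneg (fun d _ => hPDnn d)).1 (hbal.trans hS) d (mem_univ d)
      refine ⟨PG, PD, θ, fun _ _ => 0, fun _ => 0, h1, h2, h3, h4, h5,
        fun _ _ => le_refl 0, fun g => by simp [hPG0 g], fun d => by simp [hPD0 d],
        fun d => by simp, ?_⟩
      rw [hw]
      simp [hPG0]
    · have hSpos : 0 < ∑ g : G, PG g :=
        lt_of_le_of_ne (Finset.sum_nonneg fun g _ => hPGnn g) (Ne.symm hS)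
      set S : ℝ := ∑ g : G, PG g with hSdef
      have hrow : ∀ g, ∑ d : D, PG g * PD d / S = PG g := by
        intro g
        rw [← Finset.sum_div, ← Finset.mul_sum, hbal, mul_div_assoc,
          div_self hS, mul_one]
      refine ⟨PG, PD, θ, fun g d => PG g * PD d / S,
        fun d => ∑ g : G, eG g * (PG g * PD d / S), h1, h2, h3, h4, h5,
        fun g d => div_nonneg (mul_nonneg (hPGnn g) (hPDnn d)) hSpos.le,
        hrow, ?_, fun d => rfl, ?_⟩
      · intro d
        rw [← Finset.sum_div, ← Finset.sum_mul, ← hSdef, mul_comm, mul_div_assoc,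
          div_self hS, mul_one]
      · have hE : ∑ d : D, ∑ g : G, eG g * (PG g * PD d / S) = ∑ g : G, eG g * PG g := by
          rw [Finset.sum_comm]
          exact Finset.sum_congr rfl fun g _ => by rw [← Finset.mul_sum, hrow]
        rw [hw, hE, hsplit]
        ring
end

section
/- Let 𝒢 and 𝒟 be finite sets, e_G : 𝒢 → ℝ, c_D : 𝒟 → ℝ, and let π : 𝒢 × 𝒟 → ℝ with π ≥ 0. Fix generators g₁ ≠ g₂, consumers d₁ ≠ d₂, and δ ∈ ℝ with 0 ≤ δ ≤ min(π(g₁,d₂), π(g₂,d₁)). Define π' by π'(g₁,d₁) = π(g₁,d₁) + δ, π'(g₂,d₂) = π(g₂,d₂) + δ, π'(g₁,d₂) = π(g₁,d₂) − δ, π'(g₂,d₁) = π(g₂,d₁) − δ, and π'(g,d) = π(g,d) for all other pairs. Then: (i) π' ≥ 0 and π' has the same row sums Σ_d π'(g,d) = Σ_d π(g,d) for every g and the same column sums Σ_g π'(g,d) = Σ_g π(g,d) for every d; (ii) the total carbon cost changes by Σ_{g,d} c_D(d)·e_G(g)·π'(g,d) − Σ_{g,d} c_D(d)·e_G(g)·π(g,d)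 = δ·(c_D(d₁) − c_D(d₂))·(e_G(g₁) − e_G(g₂)); in particular, if e_G(g₁) ≤ e_G(g₂) and c_D(d₁) ≥ c_D(d₂), the swap does not increase the total carbon cost Σ_d c_D(d)·E_D(d). -/
open Finset

/-- Exchange argument for the carbon manager problem (8): swapping allocation mass
between two generators and two consumers preserves marginals and changes the total
carbon cost by δ·(c_D(d₁) − c_D(d₂))·(e_G(g₁) − e_G(g₂)); in particular, moving the
lower-emitting generator's power to the higher-carbon-cost consumer does not increase
the total carbon cost. -/
theorem allocation_swap
    {G D : Type*} [Fintype G] [Fintype D] [DecidableEq G] [DecidableEq D]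
    (eG : G → ℝ) (cD : D → ℝ)
    (pi : G → D → ℝ) (hpi : ∀ g d, 0 ≤ pi g d)
    (g₁ g₂ : G) (hg : g₁ ≠ g₂) (d₁ d₂ : D) (hd : d₁ ≠ d₂)
    (δ : ℝ) (hδ0 : 0 ≤ δ) (hδ : δ ≤ min (pi g₁ d₂) (pi g₂ d₁))
    (pi' : G → D → ℝ)
    (hdef : ∀ g d, pi' g d =
      if g = g₁ ∧ d = d₁ then pi g d + δ
      else if g = g₂ ∧ d = d₂ then pi g d + δ
      else if g = g₁ ∧ d = d₂ then pi g d - δ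
      else if g = g₂ ∧ d = d₁ then pi g d - δ
      else pi g d) :
    (∀ g d, 0 ≤ pi' g d) ∧
    (∀ g, ∑ d : D, pi' g d = ∑ d : D, pi g d) ∧
    (∀ d, ∑ g : G, pi' g d = ∑ g : G, pi g d) ∧
    (∑ g : G, ∑ d : D, cD d * eG g * pi' g d
        - ∑ g : G, ∑ d : D, cD d * eG g * pi g d
      = δ * (cD d₁ - cD d₂) * (eG g₁ - eG g₂)) ∧
    (eG g₁ ≤ eG g₂ → cD d₂ ≤ cD d₁ →
      ∑ g : G, ∑ d : D, cD d * eG g * pi' g d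
        ≤ ∑ g : G, ∑ d : D, cD d * eG g * pi g d) := by
  have h1 : δ ≤ pi g₁ d₂ := le_trans hδ (min_le_left _ _)
  have h2 : δ ≤ pi g₂ d₁ := le_trans hδ (min_le_right _ _)
  have hΔ : ∀ g d, pi' g d = pi g d + δ *
      ((if g = g₁ then (1:ℝ) else 0) * (if d = d₁ then 1 else 0)
      + (if g = g₂ then (1:ℝ) else 0) * (if d = d₂ then 1 else 0)
      - (if g = g₁ then (1:ℝ) else 0) * (if d = d₂ then 1 else 0)
      - (if g = g₂ then (1:ℝ) else 0) * (if d = d₁ then 1 else 0)) := by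
    intro g d
    rw [hdef]
    by_cases hga : g = g₁ <;> by_cases hgb : g = g₂ <;>
      by_cases hda : d = d₁ <;> by_cases hdb : d = d₂ <;>
      simp_all <;> ring
  have hpos : ∀ g d, 0 ≤ pi' g d := by
    intro g d
    rw [hdef]
    split_ifs with h1' h2' h3' h4'
    · linarith [hpi g d]
    · linarith [hpi g d]
    · obtain ⟨hg1, hd2⟩ := h3'; subst hg1; subst hd2; linarith
    · obtain ⟨hg2, hd1⟩ := h4'; subst hg2; subst hd1; linarith
    · exact hpi g d
  have hrow : ∀ g, ∑ d : D, pi' g d = ∑ d : D, pi g d := by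
    intro g
    simp only [hΔ, mul_add, mul_sub, Finset.sum_add_distrib, Finset.sum_sub_distrib,
      mul_ite, ite_mul, mul_zero, zero_mul, mul_one, one_mul,
      Finset.sum_ite_eq', Finset.mem_univ, if_true]
    ring
  have hΔ' : ∀ g d, pi' g d = pi g d + δ *
      ((if d = d₁ then (1:ℝ) else 0) * (if g = g₁ then 1 else 0)
      + (if d = d₂ then (1:ℝ) else 0) * (if g = g₂ then 1 else 0)
      - (if d = d₂ then (1:ℝ) else 0) * (if g = g₁ then 1 else 0)
      - (if d = d₁ then (1:ℝ) else 0) * (if g = g₂ then 1 else 0)) := by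
    intro g d
    rw [hΔ]; ring
  have hcol : ∀ d, ∑ g : G, pi' g d = ∑ g : G, pi g d := by
    intro d
    simp only [hΔ', mul_add, mul_sub, Finset.sum_add_distrib, Finset.sum_sub_distrib,
      mul_ite, ite_mul, mul_zero, zero_mul, mul_one, one_mul,
      Finset.sum_ite_eq', Finset.mem_univ, if_true]
    ring
  have key : ∑ g : G, ∑ d : D, cD d * eG g * pi' g d
        - ∑ g : G, ∑ d : D, cD d * eG g * pi g d
      = δ * (cD d₁ - cD d₂) * (eG g₁ - eG g₂) := by
    simp only [hΔ, mul_add, mul_sub, Finset.sum_add_distrib, Finset.sum_sub_distrib,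
      mul_ite, ite_mul, mul_zero, zero_mul, mul_one, one_mul,
      Finset.sum_ite_eq', Finset.mem_univ, if_true]
    ring
  refine ⟨hpos, hrow, hcol, key, fun he hc => ?_⟩
  nlinarith [mul_nonneg (mul_nonneg hδ0 (by linarith : (0:ℝ) ≤ cD d₁ - cD d₂))
    (by linarith : (0:ℝ) ≤ eG g₂ - eG g₁)]
end

section
/- Let c, λ_P, λ_G, P^min, P^max, P ∈ ℝ with P^min ≤ P ≤ P^max, and suppose there exist η̄ ≥ 0 and η ≥ 0 such that −c + λ_P − η̄ + η + λ_G = 0, η̄·(P^max − P) = 0, and η·(P − P^min) = 0. Then P is an optimal solution of the generator's profit maximization problem: for every P' with P^min ≤ P' ≤ P^max, (λ_P + λ_G − c)·P' ≤ (λ_P + λ_G − c)·P. -/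
/-- Generator component of the equivalence between the centralized market clearing
and the equilibrium model: the KKT conditions of the centralized problem certify
optimality of the dispatch for the generator's profit maximization problem (4). -/
theorem generator_kkt_optimality
    (c lamP lamG Pmin Pmax P : ℝ)
    (hlb : Pmin ≤ P) (hub : P ≤ Pmax)
    (etaU etaL : ℝ) (hetaU : 0 ≤ etaU) (hetaL : 0 ≤ etaL)
    (hstat : -c + lamP - etaU + etaL + lamG = 0)
    (hcsU : etaU * (Pmax - P) = 0)
    (hcsL : etaL * (P - Pmin) = 0) :
    ∀ P' : ℝ, Pmin ≤ P' → P' ≤ Pmax →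
      (lamP + lamG - c) * P' ≤ (lamP + lamG - c) * P := by
  intro P' h1 h2
  nlinarith [mul_nonneg hetaU (sub_nonneg.2 h2), mul_nonneg hetaL (sub_nonneg.2 h1)]
end

section
/- Let u, λ_P, λ_D, P^min, P^max, P ∈ ℝ with P^min ≤ P ≤ P^max, and suppose there exist η̄ ≥ 0 and η ≥ 0 such that u − λ_P − η̄ + η + λ_D = 0, η̄·(P^max − P) = 0, and η·(P − P^min) = 0. Then P is an optimal solution of the consumer's utility maximization problem: for every P' with P^min ≤ P' ≤ P^max, (u − λ_P + λ_D)·P' ≤ (u − λ_P + λ_D)·P. -/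
/-- Consumer component of the equivalence between the centralized market clearing
and the equilibrium model: the KKT conditions of the centralized problem certify
optimality of the consumption for the consumer's utility maximization problem (5). -/
theorem consumer_kkt_optimality
    (u lamP lamD Pmin Pmax P : ℝ)
    (hlb : Pmin ≤ P) (hub : P ≤ Pmax)
    (etaU etaL : ℝ) (hetaU : 0 ≤ etaU) (hetaL : 0 ≤ etaL)
    (hstat : u - lamP - etaU + etaL + lamD = 0)
    (hcsU : etaU * (Pmax - P) = 0)
    (hcsL : etaL * (P - Pmin) = 0) :
    ∀ P' : ℝ, Pmin ≤ P' → P' ≤ Pmax →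
      (u - lamP + lamD) * P' ≤ (u - lamP + lamD) * P := by
  intro P' h1 h2
  have hc : u - lamP + lamD = etaU - etaL := by linarith
  nlinarith [mul_nonneg hetaU (sub_nonneg.2 h2), mul_nonneg hetaL (sub_nonneg.2 h1)]
end
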